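/- Over the polynomial ring R = 𝔽_q[x] with q odd, let F = diag((1-x²)², 1) and G = diag((1-x)², (1+x)²) as symmetric 2×2 matrices. Then there exists Q ∈ GL₂(𝔽_q(x)) with QᵀFQ = G, but there is no Q ∈ GL₂(R) with QᵀFQ = G. -/

import Mathlib

/-!
Over `𝔽_q(x)` the congruence is `Q = diag((1+x)⁻¹, 1+x)`. Over `𝔽_q[x]`, the diagonal entries of
`QᵀFQ = G` read `((1-x)(1+x) a)² + c² = (1-x)²` for the first column `(a, c)` of `Q`, and the same
with `1-x` and `1+x` swapped for the second column. Then `1-x ∣ c`, and dividing out gives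
`((1+x) a)² + c'² = 1`. A polynomial solution of `u² + w² = 1` is constant when `2 ≠ 0`: over the
algebraic closure `u ± i w` are inverse units, hence constants, and so is their half-sum `u`.
So `a = 0`; likewise the other first-row entry of `Q` vanishes, and `det Q = 0`.
-/

open Polynomial Matrix

theorem natDegree_eq_zero_of_sq_add_sq_eq_one {K : Type*} [Field K] (h2 : (2 : K) ≠ 0)
    {u w : K[X]} (h : u ^ 2 + w ^ 2 = 1) : u.natDegree = 0 := by
  obtain ⟨i, hi⟩ := IsAlgClosed.exists_pow_nat_eq (-1 : AlgebraicClosure K) two_pos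
  set f := algebraMap K (AlgebraicClosure K)
  set u' := u.map f
  set w' := w.map f
  have hsq : u' ^ 2 + w' ^ 2 = 1 := by simpa using congrArg (map f) h
  have hfactor : (u' + C i * w') * (u' - C i * w') = 1 := by
    have hC : C i ^ 2 = -1 := by rw [← C_pow, hi, C_neg, C_1]
    linear_combination hsq - w' ^ 2 * hC
  have hplus := natDegree_eq_zero_of_isUnit (IsUnit.of_mul_eq_one _ hfactor)
  have hminus := natDegree_eq_zero_of_isUnit (IsUnit.of_mul_eq_one_right _ hfactor)
  have hdouble : C (2 : AlgebraicClosure K) * u' = (u' + C i * w') + (u' - C i * w') := by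
    rw [C_ofNat]; ring
  have h2' : (2 : AlgebraicClosure K) ≠ 0 := by
    rw [← map_ofNat f 2]; exact (map_ne_zero f).mpr h2
  rw [← natDegree_map_eq_of_injective f.injective, ← natDegree_C_mul h2', hdouble]
  exact Nat.le_zero.mp ((natDegree_add_le _ _).trans (by simp [hplus, hminus]))

theorem eq_zero_of_sq_mul_sq_add_sq_eq_sq {K : Type*} [Field K] (h2 : (2 : K) ≠ 0)
    {p r a c : K[X]} (hp : Prime p) (hr : 0 < r.degree)
    (h : (p * r) ^ 2 * a ^ 2 + c ^ 2 = p ^ 2) : a = 0 := by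
  obtain ⟨c', rfl⟩ : p ∣ c :=
    hp.dvd_of_dvd_pow (n := 2) ⟨p * (1 - r ^ 2 * a ^ 2), by linear_combination h⟩
  have hunit : (r * a) ^ 2 + c' ^ 2 = 1 :=
    mul_left_cancel₀ (pow_ne_zero 2 hp.ne_zero) (by linear_combination h)
  by_contra ha
  have hconst := natDegree_eq_zero_of_sq_add_sq_eq_one h2 hunit
  rw [natDegree_mul (ne_zero_of_degree_gt hr) ha] at hconst
  have hr' := natDegree_pos_iff_degree_pos.mpr hr
  omega

theorem transpose_mul_diagonal_mul_apply_self {R n : Type*} [CommRing R] [Fintype n]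
    [DecidableEq n] (d : n → R) (Q : Matrix n n R) (j : n) :
    (Qᵀ * diagonal d * Q) j j = ∑ i, d i * Q i j ^ 2 := by
  rw [mul_apply]
  simp only [mul_diagonal, transpose_apply]
  exact Finset.sum_congr rfl fun i _ => by ring

theorem diagonal_transpose_mul_diagonal_mul_diagonal {L : Type*} [Field L] (s : L) {t : L}
    (ht : t ≠ 0) :
    (diagonal ![t⁻¹, t])ᵀ * diagonal ![(s * t) ^ 2, 1] * diagonal ![t⁻¹, t] =
      diagonal ![s ^ 2, t ^ 2] := by
  rw [diagonal_transpose, diagonal_mul_diagonal, diagonal_mul_diagonal]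
  congr 1
  ext j
  fin_cases j
  · simp only [Fin.zero_eta, cons_val_zero]; field_simp
  · simp only [Fin.mk_one, cons_val_one, cons_val_fin_one]; ring

theorem FiniteField.two_ne_zero_of_odd_card {F : Type*} [Field F] [Fintype F]
    (hF : Odd (Fintype.card F)) : (2 : F) ≠ 0 :=
  Ring.two_ne_zero fun h => by
    have := FiniteField.even_card_iff_char_two.mp h
    rw [Nat.odd_iff] at hF; omega

theorem RatFunc.one_add_X_ne_zero {K : Type*} [Field K] : (1 + RatFunc.X : RatFunc K) ≠ 0 := by
  have h : (1 + X : RatFunc K) = algebraMap K[X] (RatFunc K) (Polynomial.X + Polynomial.C 1) := by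
    simp [add_comm]
  exact h ▸ algebraMap_ne_zero (X_add_C_ne_zero 1)

/-- Over `R = 𝔽_q[x]` (`q` odd), the symmetric matrices `F = diag((1-x²)², 1)` and
`G = diag((1-x)², (1+x)²)` are congruent over the fraction field `𝔽_q(x)`, but they
are not congruent over `R` itself. -/
theorem stmt5 (Fq : Type*) [Field Fq] [Fintype Fq] (hq : Odd (Fintype.card Fq)) :
    (∃ Q : Matrix (Fin 2) (Fin 2) (RatFunc Fq), IsUnit Q.det ∧
      Qᵀ * Matrix.diagonal ![((1 - RatFunc.X ^ 2) ^ 2 : RatFunc Fq), 1] * Q =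
        Matrix.diagonal ![((1 - RatFunc.X) ^ 2 : RatFunc Fq), (1 + RatFunc.X) ^ 2]) ∧
    ¬ (∃ Q : Matrix (Fin 2) (Fin 2) (Polynomial Fq), IsUnit Q.det ∧
      Qᵀ * Matrix.diagonal ![((1 - X ^ 2) ^ 2 : Polynomial Fq), 1] * Q =
        Matrix.diagonal ![((1 - X) ^ 2 : Polynomial Fq), (1 + X) ^ 2]) := by
  have h2 := FiniteField.two_ne_zero_of_odd_card hq
  have hne := RatFunc.one_add_X_ne_zero (K := Fq)
  refine ⟨⟨diagonal ![(1 + RatFunc.X)⁻¹, 1 + RatFunc.X], ?_, ?_⟩, ?_⟩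
  · simp [det_diagonal, hne]
  · rw [show (1 - RatFunc.X ^ 2 : RatFunc Fq) = (1 - RatFunc.X) * (1 + RatFunc.X) by ring]
    exact diagonal_transpose_mul_diagonal_mul_diagonal _ hne
  rintro ⟨Q, hdet, hQ⟩
  have hcol (j : Fin 2) :
      ((1 - X) * (1 + X)) ^ 2 * Q 0 j ^ 2 + Q 1 j ^ 2 = ![(1 - X) ^ 2, (1 + X) ^ 2] j := by
    have := congrFun (congrFun hQ j) j
    rw [transpose_mul_diagonal_mul_apply_self, Fin.sum_univ_two, diagonal_apply_eq] at this
    rw [← this]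
    fin_cases j <;> simp only [Fin.zero_eta, Fin.mk_one, cons_val_zero, cons_val_one] <;> ring
  have hsub : (1 - X : Fq[X]).degree = 1 := by compute_degree!
  have hadd : (1 + X : Fq[X]).degree = 1 := by compute_degree!
  have h00 : ((1 - X) * (1 + X)) ^ 2 * Q 0 0 ^ 2 + Q 1 0 ^ 2 = (1 - X) ^ 2 := hcol 0
  have h11 : ((1 + X) * (1 - X)) ^ 2 * Q 0 1 ^ 2 + Q 1 1 ^ 2 = (1 + X) ^ 2 := by
    rw [mul_comm (1 + X)]; exact hcol 1
  have h0 : Q 0 0 = 0 := eq_zero_of_sq_mul_sq_add_sq_eq_sq h2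
    (irreducible_of_degree_eq_one hsub).prime (by simp [hadd]) h00
  have h1 : Q 0 1 = 0 := eq_zero_of_sq_mul_sq_add_sq_eq_sq h2
    (irreducible_of_degree_eq_one hadd).prime (by simp [hsub]) h11
  simp [det_fin_two, h0, h1] at hdet
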